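/- arXiv:0807.0653 — 6 statements merged into one kernel-verified Lean document; each statement's English description precedes it below -/
import Mathlib

section
/- For every integer j < 0 and every integer p ≥ 2, F_{j,p}(-2/3) = 0 if and only if p + 3j = 1, where F_{j,p}(t) = ((p-1)!)² · ∏_{i=1}^{p-1} (t + (i+j)/(i(p-i))). -/
/-- `F j p t = ((p-1)!)² · ∏_{i=1}^{p-1} (t + (i+j)/(i(p-i)))`. -/
noncomputable def F (j : ℤ) (p : ℕ) (t : ℚ) : ℚ :=
  ((Nat.factorial (p - 1) : ℚ)) ^ 2 *
    ∏ i ∈ Finset.Icc 1 (p - 1), (t + ((i : ℚ) + (j : ℚ)) / ((i : ℚ) * ((p : ℚ) - (i : ℚ))))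

/-!
`F_{j,p}(-2/3)` vanishes iff some factor does, and for `0 < i < p` the `i`-th factor vanishes iff
`3j = i (2(p - i) - 3)`. For `j < 0` the right side must be negative, which forces `p - i = 1`;
then the equation reads `3j = 1 - p`.
-/

theorem F_eq_zero_iff (j : ℤ) (p : ℕ) (t : ℚ) :
    F j p t = 0 ↔ ∃ i ∈ Finset.Icc 1 (p - 1),
      t + ((i : ℚ) + (j : ℚ)) / ((i : ℚ) * ((p : ℚ) - (i : ℚ))) = 0 := by
  rw [F, mul_eq_zero, Finset.prod_eq_zero_iff]
  simp [Nat.factorial_ne_zero]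

theorem neg_two_thirds_add_div_eq_zero_iff {K : Type*} [Field K] [CharZero K] {a b : K}
    (hb : b ≠ 0) : -2 / 3 + a / b = 0 ↔ 3 * a = 2 * b := by
  rw [neg_div, neg_add_eq_zero, div_eq_div_iff (by norm_num) hb, eq_comm, mul_comm a]

theorem three_mul_add_eq_two_mul_mul_sub_iff {i j p : ℤ} (hj : j < 0) (hi : 0 < i)
    (hip : i < p) : 3 * (i + j) = 2 * (i * (p - i)) ↔ i = p - 1 ∧ p + 3 * j = 1 := by
  constructor
  · intro h
    have h3j : 3 * j = i * (2 * (p - i) - 3) := by linarith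
    have hgap : 2 * (p - i) - 3 < 0 := by
      by_contra! hge
      nlinarith
    have hi_eq : i = p - 1 := by omega
    subst hi_eq
    exact ⟨rfl, by linarith⟩
  · rintro ⟨rfl, h⟩
    linarith

theorem F_factor_at_neg_two_thirds_eq_zero_iff {j : ℤ} (hj : j < 0) {p i : ℕ} (hi : 0 < i)
    (hip : i < p) :
    -2 / 3 + ((i : ℚ) + (j : ℚ)) / ((i : ℚ) * ((p : ℚ) - (i : ℚ))) = 0 ↔
      (i : ℤ) = p - 1 ∧ (p : ℤ) + 3 * j = 1 := by
  have hden : (i : ℚ) * ((p : ℚ) - (i : ℚ)) ≠ 0 := by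
    have : (i : ℚ) < p := by exact_mod_cast hip
    exact mul_ne_zero (by positivity) (sub_ne_zero.2 this.ne')
  rw [neg_two_thirds_add_div_eq_zero_iff hden,
    ← three_mul_add_eq_two_mul_mul_sub_iff hj (by exact_mod_cast hi) (by exact_mod_cast hip)]
  exact_mod_cast Iff.rfl

theorem F_at_neg_two_thirds_eq_zero_iff_general (j : ℤ) (hj : j < 0) (p : ℕ) :
    F j p (-2/3) = 0 ↔ (p : ℤ) + 3 * j = 1 := by
  rw [F_eq_zero_iff]
  constructor
  · rintro ⟨i, hi, h⟩
    rw [Finset.mem_Icc] at hi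
    exact ((F_factor_at_neg_two_thirds_eq_zero_iff hj (by omega) (by omega)).1 h).2
  · intro h
    have hp : 4 ≤ p := by omega
    refine ⟨p - 1, Finset.mem_Icc.2 ⟨by omega, le_rfl⟩, ?_⟩
    exact (F_factor_at_neg_two_thirds_eq_zero_iff hj (by omega) (by omega)).2 ⟨by omega, h⟩

/-- For `j < 0` and `p ≥ 2`, `F_{j,p}(-2/3) = 0` if and only if `p + 3j = 1`. -/
theorem F_at_neg_two_thirds_eq_zero_iff (j : ℤ) (hj : j < 0) (p : ℕ) (hp : 2 ≤ p) :
    F j p (-2/3) = 0 ↔ (p : ℤ) + 3 * j = 1 :=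
  F_at_neg_two_thirds_eq_zero_iff_general j hj p
end

section
/- If integers p ≥ 2, j < 0, and i with 1 ≤ i ≤ p-1 satisfy 2i² + (3-2p)i + 3j = 0, then i = p - 1 and p - 1 + 3j = 0. -/
theorem root_forces_boundary_general (p j i : ℤ) (hj : j < 0)
    (h1 : 1 ≤ i) (h2 : i ≤ p - 1) (h : 2 * i ^ 2 + (3 - 2 * p) * i + 3 * j = 0) :
    i = p - 1 ∧ p - 1 + 3 * j = 0 := by
  have hfactor : i * (2 * i + 3 - 2 * p) = -3 * j := by linear_combination h
  -- `-3 * j` and `i` are positive, hence so is the cofactor; over `ℤ` that means `i ≥ p - 1`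
  have hcofactor : 0 < 2 * i + 3 - 2 * p := pos_of_mul_pos_right (by rw [hfactor]; omega) (by omega)
  obtain rfl : i = p - 1 := by omega
  exact ⟨rfl, by linear_combination h⟩

/-- If integers `p ≥ 2`, `j < 0` and `1 ≤ i ≤ p-1` satisfy `2i² + (3-2p)i + 3j = 0`,
then `i = p - 1` and `p - 1 + 3j = 0`. -/
theorem root_forces_boundary (p j i : ℤ) (hp : 2 ≤ p) (hj : j < 0)
    (h1 : 1 ≤ i) (h2 : i ≤ p - 1) (h : 2 * i ^ 2 + (3 - 2 * p) * i + 3 * j = 0) :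
    i = p - 1 ∧ p - 1 + 3 * j = 0 :=
  root_forces_boundary_general p j i hj h1 h2 h
end

section
/- The formulas e_i f_j = j f_{i+j} for j ≥ 0, e_i f_j = (i+j) f_{i+j} for j < 0 and i + j ≤ 0, and e_i f_j = f_{i+j} for j < 0 and i + j > 0, define a module structure over the Lie algebra L₁ on the vector space with basis {f_j : j ∈ ℤ}; that is, e_i (e_k f_j) - e_k (e_i f_j) = (k - i) e_{i+k} f_j for all i, k ≥ 1 and j ∈ ℤ. -/
/-!
Write `e_i f_j = c(i, j) f_{i+j}`. Checking the cases of the piecewise definition, the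
composite `e_i e_k f_j` is `(k + j) c(i + k, j) f_{i+k+j}` in every case. Antisymmetrizing in
`i` and `k` leaves `((k + j) - (i + j)) c(i + k, j) = (k - i) c(i + k, j)`, the coefficient of
`(k - i) e_{i+k} f_j`.
-/

/-- The structure coefficient of the action of `e_i` on `f_j`: `e_i f_j = coeff i j • f_{i+j}`. -/
noncomputable def coeff (i : ℕ) (j : ℤ) : ℚ :=
  if 0 ≤ j then (j : ℚ) else if (i : ℤ) + j ≤ 0 then ((i : ℤ) + j : ℤ) else 1

/-- The action of `e_i` on the free module `ℤ →₀ ℚ` with basis `(f_j)_{j ∈ ℤ}`,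
where `f_j = Finsupp.single j 1`. -/
noncomputable def act (i : ℕ) (v : ℤ →₀ ℚ) : ℤ →₀ ℚ :=
  v.sum fun j c => (c * coeff i j) • Finsupp.single ((i : ℤ) + j) (1 : ℚ)

lemma coeff_of_nonneg (i : ℕ) {j : ℤ} (hj : 0 ≤ j) : coeff i j = j := if_pos hj

lemma coeff_of_neg_of_add_nonpos {i : ℕ} {j : ℤ} (hj : j < 0) (h : (i : ℤ) + j ≤ 0) :
    coeff i j = ((i + j : ℤ) : ℚ) := by
  rw [coeff, if_neg hj.not_ge, if_pos h]

lemma coeff_of_neg_of_add_pos {i : ℕ} {j : ℤ} (hj : j < 0) (h : 0 < (i : ℤ) + j) :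
    coeff i j = 1 := by
  rw [coeff, if_neg hj.not_ge, if_neg h.not_ge]

lemma coeff_mul_coeff_add (i k : ℕ) (j : ℤ) :
    coeff k j * coeff i (k + j) = ((k + j : ℤ) : ℚ) * coeff (i + k) j := by
  rcases le_or_gt 0 j with hj | hj
  · rw [coeff_of_nonneg _ hj, coeff_of_nonneg _ (by omega), coeff_of_nonneg _ hj]
    ring
  rcases le_or_gt ((k : ℤ) + j) 0 with hkj | hkj
  · rw [coeff_of_neg_of_add_nonpos hj hkj]
    rcases hkj.eq_or_lt with hkj | hkj
    · simp only [hkj, Int.cast_zero, zero_mul]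
    rcases le_or_gt ((i + k : ℕ) + j) 0 with hikj | hikj
    · rw [coeff_of_neg_of_add_nonpos hkj (by omega), coeff_of_neg_of_add_nonpos hj hikj]
      push_cast
      ring
    · rw [coeff_of_neg_of_add_pos hkj (by omega), coeff_of_neg_of_add_pos hj hikj]
  · rw [coeff_of_neg_of_add_pos hj hkj, coeff_of_nonneg _ hkj.le,
      coeff_of_neg_of_add_pos hj (by omega)]
    ring

lemma act_single (i : ℕ) (j : ℤ) (c : ℚ) :
    act i (Finsupp.single j c) = Finsupp.single ((i : ℤ) + j) (c * coeff i j) := by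
  rw [act, Finsupp.sum_single_index] <;> simp

lemma act_act_single (i k : ℕ) (j : ℤ) :
    act i (act k (Finsupp.single j 1)) =
      Finsupp.single ((i + k : ℕ) + j) (((k + j : ℤ) : ℚ) * coeff (i + k) j) := by
  rw [act_single, act_single, one_mul, coeff_mul_coeff_add]
  congr 1
  push_cast
  ring

theorem act_defines_module_general (i k : ℕ) (j : ℤ) :
    act i (act k (Finsupp.single j 1)) - act k (act i (Finsupp.single j 1)) =
      ((k : ℚ) - (i : ℚ)) • act (i + k) (Finsupp.single j 1) := by
  rw [act_act_single, act_act_single, add_comm k i, act_single, ← Finsupp.single_sub,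
    Finsupp.smul_single]
  congr 1
  push_cast
  ring

/-- The formulas defining `M̃` give a module structure over `L₁`:
`e_i (e_k f_j) - e_k (e_i f_j) = (k - i) e_{i+k} f_j` for all `i, k ≥ 1`, `j ∈ ℤ`. -/
theorem act_defines_module (i k : ℕ) (hi : 1 ≤ i) (hk : 1 ≤ k) (j : ℤ) :
    act i (act k (Finsupp.single j 1)) - act k (act i (Finsupp.single j 1)) =
      ((k : ℚ) - (i : ℚ)) • act (i + k) (Finsupp.single j 1) :=
  act_defines_module_general i k j
end

section
/- For integers j < 0 and p ≥ 2 with p + j > 0, the sum over all compositions (i_1,...,i_s) of p of c_p(i_1,...,i_s) t^{p-s} ∏_{l=2}^{s}(i_l + ⋯ + i_s + j) equals ((p-1)!)² ∏_{i=1}^{p-1} (t + (i+j)/(i(p-i))), as polynomials in t over ℚ. -/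
open Classical

/-- The Benoit–Saint-Aubin coefficient `c_p(i_1,…,i_s) = ∏ k(p-k)`, the product over
`1 ≤ k < p` such that `k` is not a partial sum `i_1 + ⋯ + i_l`, `l = 1, …, s-1`. -/
noncomputable def bsaCoeff (p : ℕ) (L : List ℕ) : ℕ :=
  ∏ k ∈ (Finset.Ico 1 p).filter
      (fun k => ∀ l ∈ Finset.Ico 1 L.length, (L.take l).sum ≠ k),
    k * (p - k)

/-!
Multiplying the `i`-th factor by `i(p-i)` and reflecting `i ↦ p - i`, the right-hand side
becomes `∏_{0<i<p} ((p-i+j) + i(p-i)t)`. Expanding gives a sum over subsets `S ⊆ {1,…,p-1}`,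
and a composition of `p` is the same thing as the set `S` of its interior partial sums.
The factors with `i ∉ S` contribute `c_p · t^{p-s}`, and those with `i ∈ S` the suffix sums
`i_{l+1} + ⋯ + i_s + j = p - (i_1 + ⋯ + i_l) + j`.
-/

open Finset

lemma Nat.Icc_one_sub_one_eq_Ico (n : ℕ) : Icc 1 (n - 1) = Ico 1 n := by
  ext k; simp only [mem_Icc, mem_Ico]; omega

lemma Finset.prod_Ico_one_reflect {M : Type*} [CommMonoid M] (f : ℕ → M) (n : ℕ) :
    ∏ k ∈ Ico 1 n, f (n - k) = ∏ k ∈ Ico 1 n, f k := by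
  simpa using prod_Ico_reflect f 1 (Nat.le_succ n)

lemma Nat.sq_factorial_sub_one (n : ℕ) :
    (n - 1).factorial ^ 2 = ∏ k ∈ Ico 1 n, k * (n - k) := by
  have hfact : ∏ k ∈ Ico 1 n, k = (n - 1).factorial := by
    cases n with
    | zero => rfl
    | succ n => exact prod_Ico_id_eq_factorial n
  rw [prod_mul_distrib, prod_Ico_one_reflect (fun k => k), hfact, sq]

def Fin.succValEmbedding (n : ℕ) : Fin (n - 1) ↪ ℕ :=
  Fin.valEmbedding.trans (addRightEmbedding 1)

lemma Fin.image_succValEmbedding_univ (n : ℕ) :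
    (univ : Finset (Fin (n - 1))).image (Fin.succValEmbedding n) = Ico 1 n := by
  ext k
  simp only [mem_Ico, mem_image, mem_univ, true_and, Fin.succValEmbedding,
    Function.Embedding.trans_apply, Fin.valEmbedding_apply, addRightEmbedding_apply]
  constructor
  · rintro ⟨i, rfl⟩
    omega
  · intro hk
    exact ⟨⟨k - 1, by omega⟩, by simp only; omega⟩

namespace Composition

variable {n : ℕ} (c : Composition n)

def interiorBoundaries : Finset ℕ :=
  (Ico 1 c.length).image c.sizeUpTo

lemma strictMonoOn_sizeUpTo : StrictMonoOn c.sizeUpTo (Set.Iic c.length) :=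
  fun i hi j hj hij => c.boundary.strictMono
    (show (⟨i, Nat.lt_succ_of_le hi⟩ : Fin (c.length + 1)) < ⟨j, Nat.lt_succ_of_le hj⟩
      from hij)

lemma interiorBoundaries_subset : c.interiorBoundaries ⊆ Ico 1 n := by
  intro k hk
  obtain ⟨l, hl, rfl⟩ := mem_image.1 hk
  obtain ⟨hl₁, hl₂⟩ := mem_Ico.1 hl
  have h₀ := c.strictMonoOn_sizeUpTo (Set.mem_Iic.2 (Nat.zero_le _)) hl₂.le (by omega : 0 < l)
  have h₁ := c.strictMonoOn_sizeUpTo hl₂.le (Set.mem_Iic.2 le_rfl) hl₂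
  rw [sizeUpTo_zero] at h₀
  rw [sizeUpTo_length] at h₁
  exact mem_Ico.2 ⟨h₀, h₁⟩

lemma injOn_sizeUpTo : Set.InjOn c.sizeUpTo (Ico 1 c.length) :=
  c.strictMonoOn_sizeUpTo.injOn.mono fun _ hl => (mem_Ico.1 hl).2.le

lemma card_interiorBoundaries : #c.interiorBoundaries = c.length - 1 := by
  rw [interiorBoundaries, card_image_of_injOn c.injOn_sizeUpTo, Nat.card_Ico]

lemma card_Ico_sdiff_interiorBoundaries : #(Ico 1 n \ c.interiorBoundaries) = n - c.length := by
  have := c.length_pos_iff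
  have := c.length_le
  rw [card_sdiff_of_subset c.interiorBoundaries_subset, Nat.card_Ico, card_interiorBoundaries]
  omega

lemma mem_compositionAsSetEquiv_iff (i : Fin (n - 1)) :
    i ∈ compositionAsSetEquiv n c.toCompositionAsSet ↔
      (i : ℕ) + 1 ∈ c.interiorBoundaries := by
  have hi := i.2
  simp only [compositionAsSetEquiv, Equiv.coe_fn_mk, Set.mem_toFinset, Set.mem_ofPred_eq,
    toCompositionAsSet, boundaries, mem_map, mem_univ, true_and, interiorBoundaries, mem_image,
    mem_Ico, boundary, RelEmbedding.coe_toEmbedding, OrderEmbedding.coe_ofStrictMono, Fin.ext_iff,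
    Fin.exists_iff]
  constructor
  · rintro ⟨l, hl, h⟩
    refine ⟨l, ⟨Nat.pos_of_ne_zero ?_, ?_⟩, by omega⟩
    · rintro rfl
      rw [sizeUpTo_zero] at h
      omega
    · by_contra hle
      rw [c.sizeUpTo_ofLength_le l (by omega)] at h
      omega
  · rintro ⟨l, ⟨-, hl⟩, h⟩
    exact ⟨l, by omega, by omega⟩

lemma interiorBoundaries_eq_image :
    c.interiorBoundaries =
      (compositionAsSetEquiv n c.toCompositionAsSet).image (Fin.succValEmbedding n) := by
  ext k
  simp only [mem_image, Fin.succValEmbedding, Function.Embedding.trans_apply,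
    Fin.valEmbedding_apply, addRightEmbedding_apply]
  constructor
  · intro hk
    have := mem_Ico.1 (c.interiorBoundaries_subset hk)
    refine ⟨⟨k - 1, by omega⟩, ?_, by simp only; omega⟩
    rw [mem_compositionAsSetEquiv_iff]
    convert hk using 1
    simp only
    omega
  · rintro ⟨i, hi, rfl⟩
    exact (c.mem_compositionAsSetEquiv_iff i).1 hi

theorem sum_interiorBoundaries {M : Type*} [AddCommMonoid M] (F : Finset ℕ → M) :
    ∑ c : Composition n, F c.interiorBoundaries = ∑ S ∈ (Ico 1 n).powerset, F S := by
  rw [← Fin.image_succValEmbedding_univ, powerset_image,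
    sum_image (image_injective (Fin.succValEmbedding n).injective).injOn, powerset_univ]
  exact Fintype.sum_equiv ((compositionEquiv n).trans (compositionAsSetEquiv n)) _ _
    fun c => congrArg F c.interiorBoundaries_eq_image

lemma prod_Icc_drop_sum {M : Type*} [CommMonoid M] (f : ℕ → M) :
    ∏ l ∈ Icc 1 (c.length - 1), f (c.blocks.drop l).sum =
      ∏ k ∈ c.interiorBoundaries, f (n - k) := by
  rw [Nat.Icc_one_sub_one_eq_Ico, interiorBoundaries, prod_image c.injOn_sizeUpTo]
  refine prod_congr rfl fun l _ => congrArg f ?_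
  have := c.blocks.sum_take_add_sum_drop l
  rw [c.blocks_sum] at this
  rw [sizeUpTo]
  omega

lemma bsaCoeff_eq_prod_sdiff :
    bsaCoeff n c.blocks = ∏ k ∈ Ico 1 n \ c.interiorBoundaries, k * (n - k) := by
  rw [bsaCoeff]
  congr 1
  ext k
  simp only [mem_filter, mem_sdiff, interiorBoundaries, mem_image, mem_Ico,
    blocks_length, sizeUpTo, not_exists, not_and]

end Composition

theorem bsa_sum_over_compositions_general (p : ℕ) (j : ℤ) (t : ℚ) :
    ∑ c : Composition p,
        (bsaCoeff p c.blocks : ℚ) * t ^ (p - c.length) *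
          ∏ l ∈ Finset.Icc 1 (c.length - 1), (((c.blocks.drop l).sum : ℚ) + (j : ℚ)) =
      ((Nat.factorial (p - 1) : ℚ)) ^ 2 *
        ∏ i ∈ Finset.Icc 1 (p - 1),
          (t + ((i : ℚ) + (j : ℚ)) / ((i : ℚ) * ((p : ℚ) - (i : ℚ)))) := by
  symm
  calc _ = ∏ k ∈ Ico 1 p, (((k * (p - k) : ℕ) : ℚ) * t + (k + j)) := by
        rw [Nat.Icc_one_sub_one_eq_Ico, ← Nat.cast_pow, Nat.sq_factorial_sub_one, Nat.cast_prod,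
          ← prod_mul_distrib]
        refine prod_congr rfl fun k hk => ?_
        obtain ⟨hk₁, hk₂⟩ := mem_Ico.1 hk
        have hk₀ : (k : ℚ) ≠ 0 := Nat.cast_ne_zero.2 (by omega)
        have hpk : (p : ℚ) - k ≠ 0 := sub_ne_zero.2 (by exact_mod_cast hk₂.ne')
        push_cast [Nat.cast_sub hk₂.le]
        field_simp
    _ = ∏ k ∈ Ico 1 p, ((((p - k : ℕ) : ℚ) + j) + ((k * (p - k) : ℕ) : ℚ) * t) := by
        rw [← prod_Ico_one_reflect]
        refine prod_congr rfl fun k hk => ?_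
        rw [Nat.sub_sub_self (mem_Ico.1 hk).2.le, mul_comm k, add_comm]
    _ = _ := by
        rw [prod_add, ← Composition.sum_interiorBoundaries]
        refine sum_congr rfl fun c _ => ?_
        rw [c.bsaCoeff_eq_prod_sdiff, c.prod_Icc_drop_sum (fun m => (m : ℚ) + j),
          prod_mul_distrib, prod_const, c.card_Ico_sdiff_interiorBoundaries, Nat.cast_prod]
        ring

/-- For `j < 0`, `p ≥ 2`, `p + j > 0`, the sum over all compositions `(i_1,…,i_s)` of `p`
of `c_p(i_1,…,i_s) t^{p-s} ∏_{l=2}^{s}(i_l + ⋯ + i_s + j)` equals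
`((p-1)!)² ∏_{i=1}^{p-1} (t + (i+j)/(i(p-i)))`, for every `t : ℚ`. -/
theorem bsa_sum_over_compositions (p : ℕ) (hp : 2 ≤ p) (j : ℤ) (hj : j < 0)
    (hpj : 0 < (p : ℤ) + j) (t : ℚ) :
    ∑ c : Composition p,
        (bsaCoeff p c.blocks : ℚ) * t ^ (p - c.length) *
          ∏ l ∈ Finset.Icc 1 (c.length - 1), (((c.blocks.drop l).sum : ℚ) + (j : ℚ)) =
      ((Nat.factorial (p - 1) : ℚ)) ^ 2 *
        ∏ i ∈ Finset.Icc 1 (p - 1),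
          (t + ((i : ℚ) + (j : ℚ)) / ((i : ℚ) * ((p : ℚ) - (i : ℚ)))) :=
  bsa_sum_over_compositions_general p j t
end

section
/- In the universal enveloping algebra of the Lie algebra L₁ (with basis e_i, i ≥ 1, and [e_i,e_j]=(j-i)e_{i+j}), the identity (e₁³ - 6e₂e₁ + 6e₃)(e₁² - (2/3)e₂) = (e₁⁴ - (20/3)e₂e₁² + 4e₂² + 4e₃e₁ - 4e₄)e₁ holds. -/
/-!
Only four brackets enter: `[e₁,e₂] = e₃`, `[e₁,e₃] = 2e₄`, `[e₁,e₄] = 3e₅`, `[e₂,e₃] = e₅`.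
After expanding the left-hand side, moving `e₂` to the front in the words `e₁³e₂` and `e₂e₁e₂`
with these brackets makes the `e₃e₂` and `e₅` terms cancel; what remains is an identity that holds
in any ring once multiplied by 3.
-/

open UniversalEnvelopingAlgebra

theorem UniversalEnvelopingAlgebra.ι_mul_ι {R L : Type*} [CommRing R] [LieRing L] [LieAlgebra R L]
    (x y : L) : ι R x * ι R y = ι R y * ι R x + ι R ⁅x, y⁆ := by
  let _ := LieRing.ofAssociativeRing (A := UniversalEnvelopingAlgebra R L)
  rw [LieHom.map_lie, Ring.lie_def, add_sub_cancel]

section CommutationRelations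

variable {A : Type*} [Ring A] {a b c d f : A}

theorem pow_three_mul_of_comm_rels (hab : a * b = b * a + c) (hac : a * c = c * a + 2 * d)
    (had : a * d = d * a + 3 * f) :
    a ^ 3 * b = b * a ^ 3 + 3 * (c * a ^ 2) + 6 * (d * a) + 6 * f := by
  have hsq : a ^ 2 * b = b * a ^ 2 + 2 * (c * a) + 2 * d := by
    rw [sq, mul_assoc, hab, mul_add, ← mul_assoc, hab, hac]; noncomm_ring
  calc a ^ 3 * b = a * (b * a ^ 2 + 2 * (c * a) + 2 * d) := by rw [pow_succ', mul_assoc, hsq]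
    _ = (a * b) * a ^ 2 + 2 * ((a * c) * a) + 2 * (a * d) := by noncomm_ring
    _ = b * a ^ 3 + 3 * (c * a ^ 2) + 6 * (d * a) + 6 * f := by rw [hab, hac, had]; noncomm_ring

theorem cleared_identity_of_comm_rels (hab : a * b = b * a + c) (hac : a * c = c * a + 2 * d)
    (had : a * d = d * a + 3 * f) (hbc : b * c = c * b + f) :
    (a ^ 3 - 6 * b * a + 6 * c) * (3 * a ^ 2 - 2 * b) =
      (3 * a ^ 4 - 20 * (b * a ^ 2) + 12 * b ^ 2 + 12 * c * a - 12 * d) * a := by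
  have hbab : b * a * b = b ^ 2 * a + c * b + f := by
    rw [mul_assoc, hab, mul_add, hbc]; noncomm_ring
  calc (a ^ 3 - 6 * b * a + 6 * c) * (3 * a ^ 2 - 2 * b)
      = 3 * a ^ 5 - 18 * (b * a ^ 3) + 18 * (c * a ^ 2) - 2 * (a ^ 3 * b) + 12 * (b * a * b)
          - 12 * (c * b) := by noncomm_ring
    _ = _ := by rw [pow_three_mul_of_comm_rels hab hac had, hbab]; noncomm_ring

theorem identity_of_comm_rels [Algebra ℚ A] (hab : a * b = b * a + c)
    (hac : a * c = c * a + 2 * d) (had : a * d = d * a + 3 * f) (hbc : b * c = c * b + f) :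
    (a ^ 3 - 6 * b * a + 6 * c) * (a ^ 2 - (2 / 3 : ℚ) • b) =
      (a ^ 4 - (20 / 3 : ℚ) • (b * a ^ 2) + 4 * b ^ 2 + 4 * c * a - 4 * d) * a := by
  apply smul_right_injective A (three_ne_zero (α := ℚ))
  dsimp only
  rw [← mul_smul_comm, ← smul_mul_assoc, smul_sub, smul_smul, smul_sub, smul_add, smul_add,
    smul_sub, smul_smul]
  norm_num [ofNat_smul_eq_nsmul (R := ℚ), Nat.ofNat_nsmul_eq_mul]
  convert cleared_identity_of_comm_rels hab hac had hbc using 2; noncomm_ring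

end CommutationRelations

/-- In the universal enveloping algebra of the Lie algebra `L₁` — given by elements
`e i` (`i ≥ 1`) with `⁅e i, e j⁆ = (j - i) • e (i+j)` — the identity
`(e₁³ - 6e₂e₁ + 6e₃)(e₁² - (2/3)e₂) = (e₁⁴ - (20/3)e₂e₁² + 4e₂² + 4e₃e₁ - 4e₄)e₁` holds. -/
theorem envAlg_identity (L : Type*) [LieRing L] [LieAlgebra ℚ L]
    (e : ℕ → L)
    (he : ∀ i j : ℕ, 1 ≤ i → 1 ≤ j → ⁅e i, e j⁆ = (((j : ℚ) - (i : ℚ))) • e (i + j)) :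
    letI E : ℕ → UniversalEnvelopingAlgebra ℚ L := fun i => ι ℚ (e i)
    (E 1 ^ 3 - 6 * E 2 * E 1 + 6 * E 3) * (E 1 ^ 2 - (2/3 : ℚ) • E 2) =
      (E 1 ^ 4 - (20/3 : ℚ) • (E 2 * E 1 ^ 2) + 4 * E 2 ^ 2 + 4 * E 3 * E 1 - 4 * E 4) * E 1 := by
  have comm (i j : ℕ) (hi : 1 ≤ i) (hij : i ≤ j) : ι ℚ (e i) * ι ℚ (e j) =
      ι ℚ (e j) * ι ℚ (e i) + ((j - i : ℕ) : UniversalEnvelopingAlgebra ℚ L) * ι ℚ (e (i + j)) := by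
    rw [ι_mul_ι, he i j hi (hi.trans hij), map_smul, ← Nat.cast_sub hij, Nat.cast_smul_eq_nsmul,
      nsmul_eq_mul]
  apply identity_of_comm_rels (f := ι ℚ (e 5))
  · simpa using comm 1 2 le_rfl one_le_two
  · simpa using comm 1 3 le_rfl (by norm_num)
  · simpa using comm 1 4 le_rfl (by norm_num)
  · simpa using comm 2 3 one_le_two (by norm_num)
end

section
/- In the Chevalley–Eilenberg complex of the Lie algebra L₁, the 2-cochain e² ∧ e⁵ - 3 e³ ∧ e⁴ is closed (where eⁱ denotes the dual basis element to e_i), and it is not a coboundary. -/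
/-! `c` is homogeneous of weight 7, so `dc` can be nonzero only in weight 7, where just finitely
many triples `(i, j, k)` occur; and the coboundary `d(b)` of a 1-cochain sees `b` in weight 7
only through `b 7`, which cannot match both `c 2 5 = 1` (forcing `b 7 = -1/3`) and
`c 3 4 = -3` (forcing `b 7 = 3`). -/

/-- The 2-cochain `e² ∧ e⁵ - 3 e³ ∧ e⁴` on `L₁`, recorded by its values
`c i j = (e² ∧ e⁵ - 3 e³ ∧ e⁴)(e_i, e_j)`. -/
def c (i j : ℕ) : ℚ :=
  if i = 2 ∧ j = 5 then 1 else if i = 5 ∧ j = 2 then -1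
  else if i = 3 ∧ j = 4 then -3 else if i = 4 ∧ j = 3 then 3 else 0

lemma c_eq_zero_of_add_ne_seven {i j : ℕ} (h : i + j ≠ 7) : c i j = 0 := by
  unfold c
  split_ifs <;> first | rfl | omega

lemma c_closed_of_add_ne_seven {i j k : ℕ} (h : i + j + k ≠ 7) :
    -(((j : ℚ) - i) * c (i + j) k) + ((k : ℚ) - i) * c (i + k) j
      - ((k : ℚ) - j) * c (j + k) i = 0 := by
  rw [c_eq_zero_of_add_ne_seven (by omega), c_eq_zero_of_add_ne_seven (by omega),
    c_eq_zero_of_add_ne_seven (by omega)]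
  ring

lemma c_closed_of_add_eq_seven {i j k : ℕ} (hi : 1 ≤ i) (hj : 1 ≤ j) (hk : 1 ≤ k)
    (h : i + j + k = 7) :
    -(((j : ℚ) - i) * c (i + j) k) + ((k : ℚ) - i) * c (i + k) j
      - ((k : ℚ) - j) * c (j + k) i = 0 := by
  have hi5 : i ≤ 5 := by omega
  have hj5 : j ≤ 5 := by omega
  have hk5 : k ≤ 5 := by omega
  interval_cases i <;> interval_cases j <;> interval_cases k <;> simp_all [c] <;> norm_num

lemma c_ne_coboundary (b : ℕ → ℚ) :
    c 2 5 ≠ -(3 * b 7) ∨ c 3 4 ≠ -b 7 := by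
  by_contra! h
  obtain ⟨h25, h34⟩ := h
  simp only [c] at h25 h34
  norm_num at h25 h34
  linarith

/-- In the Chevalley–Eilenberg complex of `L₁` (basis `e_i`, `i ≥ 1`,
`[e_i,e_j] = (j-i)e_{i+j}`), the 2-cochain `e² ∧ e⁵ - 3e³ ∧ e⁴` is closed:
`dc(e_i,e_j,e_k) = -c([e_i,e_j],e_k) + c([e_i,e_k],e_j) - c([e_j,e_k],e_i) = 0`;
and it is not a coboundary: for every 1-cochain `b` (with
`db(e_i,e_j) = -b([e_i,e_j]) = -(j-i) b(i+j)`) some value of `c` differs from `db`. -/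
theorem cocycle_g2_plus_closed_not_exact :
    (∀ i j k : ℕ, 1 ≤ i → 1 ≤ j → 1 ≤ k →
      -(((j : ℚ) - i) * c (i + j) k) + ((k : ℚ) - i) * c (i + k) j
        - ((k : ℚ) - j) * c (j + k) i = 0) ∧
    (∀ b : ℕ → ℚ, ∃ i j : ℕ, 1 ≤ i ∧ 1 ≤ j ∧ c i j ≠ -(((j : ℚ) - i) * b (i + j))) := by
  refine ⟨fun i j k hi hj hk => ?_, fun b => ?_⟩
  · by_cases h : i + j + k = 7
    · exact c_closed_of_add_eq_seven hi hj hk h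
    · exact c_closed_of_add_ne_seven h
  · rcases c_ne_coboundary b with h | h
    · exact ⟨2, 5, by norm_num, by norm_num, by norm_num [h]⟩
    · exact ⟨3, 4, by norm_num, by norm_num, by norm_num [h]⟩
end
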